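/- For every inclusion of simplicial sets X ↪ Y and every set ν of vertices of Y, the inclusion X ↪ Y widened at ν, i.e. the monomorphism ({0} × Y) ∪ W_{ν ∩ X₀}(X) ↪ W_ν(Y), is a retract in the arrow category of SSet of the pushout-product ({0} ↪ J) □ (X ↪ Y) : ({0} × Y) ∪ (J × X) ↪ J × Y. -/

import Mathlib

open CategoryTheory Simplicial Opposite Limits

namespace Paper

/-! ## The simplicial set `J`, nerve of the free-living isomorphism -/

/-- The simplicial set `J`, the nerve of the free-living isomorphism `𝕀`:
its `n`-simplices are the tuples `{0,1}^(n+1)` (recorded as `Bool`-valued functions,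
`false` being the vertex `0` and `true` the vertex `1`), with all simplicial
operators acting by reindexing. -/
def J : SSet.{0} where
  obj m := Fin (m.unop.len + 1) → Bool
  map f := TypeCat.ofHom (fun a => a ∘ f.unop.toOrderHom)
  map_id _ := rfl
  map_comp _ _ := rfl

/-- The two vertices `0, 1 : Δ[0] ⟶ J` of `J`; `ptJ false` is the vertex `0` and
`ptJ true` is the vertex `1`. -/
def ptJ (b : Bool) : Δ[0] ⟶ J where
  app _ := TypeCat.ofHom (fun _ => fun _ => b)
  naturality _ _ _ := rfl

/-- The boundary `∂J = {0} ∪ {1}` of `J` (two discrete points). -/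
def bJ : SSet.{0} where
  obj _ := Bool
  map _ := TypeCat.ofHom (fun b => b)
  map_id _ := rfl
  map_comp _ _ := rfl

/-- The inclusion `∂J ↪ J`. -/
def bJIncl : bJ ⟶ J where
  app _ := TypeCat.ofHom (fun b => fun _ => b)
  naturality _ _ _ := rfl

/-! ## Binary products and pushout-products -/

/-- The (pointwise) product of two simplicial sets. -/
def sprod (X Y : SSet.{0}) : SSet.{0} where
  obj m := X.obj m × Y.obj m
  map f := TypeCat.ofHom (fun p => (X.map f p.1, Y.map f p.2))
  map_id m := by
    ext p
    · exact FunctorToTypes.map_id_apply X p.1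
    · exact FunctorToTypes.map_id_apply Y p.2
  map_comp f g := by
    ext p
    · exact FunctorToTypes.map_comp_apply X f g p.1
    · exact FunctorToTypes.map_comp_apply Y f g p.2

/-- The product of two morphisms of simplicial sets. -/
def sprodMap {X X' Y Y' : SSet.{0}} (f : X ⟶ X') (g : Y ⟶ Y') : sprod X Y ⟶ sprod X' Y' where
  app m := TypeCat.ofHom (fun p => (f.app m p.1, g.app m p.2))
  naturality m m' φ := by
    ext p
    have h1 := NatTrans.naturality_apply f φ p.1
    have h2 := NatTrans.naturality_apply g φ p.2
    exact Prod.ext h1 h2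

/-- The pushout-product `f □ g : (A × Z) ∪ (B × W) ⟶ B × Z` of `f : A ⟶ B` and
`g : W ⟶ Z`, the domain being presented as the pushout `(A × Z) ∪_{A × W} (B × W)`. -/
noncomputable def pp {A B W Z : SSet.{0}} (f : A ⟶ B) (g : W ⟶ Z) :
    pushout (sprodMap (𝟙 A) g) (sprodMap f (𝟙 W)) ⟶ sprod B Z :=
  pushout.desc (sprodMap f (𝟙 Z)) (sprodMap (𝟙 B) g) rfl

/-! ## Saturated classes of morphisms -/

/-- A class of morphisms is stable under retracts if, whenever `f` is a retract of `g`
in the arrow category, membership of `g` implies membership of `f`. -/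
def StableUnderRetracts (T : MorphismProperty SSet.{0}) : Prop :=
  ∀ ⦃X Y X' Y' : SSet.{0}⦄ (f : X ⟶ Y) (g : X' ⟶ Y')
    (i : Arrow.mk f ⟶ Arrow.mk g) (r : Arrow.mk g ⟶ Arrow.mk f),
    i ≫ r = 𝟙 _ → T g → T f

/-- The inclusion functor `Set.Iio i ⥤ ι`. -/
def iioFunctor {ι : Type} [Preorder ι] (i : ι) : Set.Iio i ⥤ ι :=
  Monotone.functor (f := Subtype.val) (fun _ _ h => h)

/-- The cocone on the restriction of `F : ι ⥤ SSet` to `Set.Iio i` with apex `F.obj i`. -/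
def restrictionCocone {ι : Type} [Preorder ι] (F : ι ⥤ SSet.{0}) (i : ι) :
    Cocone (iioFunctor i ⋙ F) where
  pt := F.obj i
  ι :=
    { app := fun j => F.map (homOfLE j.2.le)
      naturality := fun j k h => by
        dsimp [iioFunctor]
        rw [← F.map_comp, Category.comp_id]
        congr 1 }

/-- A class of morphisms is stable under transfinite composition if, for every
well-ordered type `ι` and every functor `F : ι ⥤ SSet` which is continuous at limit
stages and whose successor maps `F.obj i ⟶ F.obj (i+1)` all belong to the class, and
every colimit cocone `c` on `F`, the transfinite composite `F.obj ⊥ ⟶ c.pt` belongs to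
the class. -/
def StableUnderTransfiniteComposition (T : MorphismProperty SSet.{0}) : Prop :=
  ∀ (ι : Type) [LinearOrder ι] [SuccOrder ι] [OrderBot ι] [WellFoundedLT ι]
    (F : ι ⥤ SSet.{0}),
    (∀ i : ι, ¬IsMax i → T (F.map (homOfLE (Order.le_succ i)))) →
    (∀ i : ι, Order.IsSuccLimit i → Nonempty (IsColimit (restrictionCocone F i))) →
    ∀ (c : Cocone F), IsColimit c → T (c.ι.app ⊥)

/-- A class of morphisms of simplicial sets is saturated if it is closed under
isomorphisms, pushouts, transfinite compositions, and retracts. -/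
structure IsSaturated (T : MorphismProperty SSet.{0}) : Prop where
  respectsIso : T.RespectsIso
  stableUnderCobaseChange : T.IsStableUnderCobaseChange
  stableUnderRetracts : StableUnderRetracts T
  stableUnderTransfiniteComposition : StableUnderTransfiniteComposition T

/-- The saturated closure of a class of morphisms: the smallest saturated class
containing it. -/
def satClosure (S : MorphismProperty SSet.{0}) : MorphismProperty SSet.{0} :=
  fun _ _ f => ∀ T : MorphismProperty SSet.{0}, IsSaturated T → S ≤ T → T f

/-! ## Subcomplexes -/

/-- A subcomplex of a simplicial set. -/
structure Sub (X : SSet.{0}) where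
  carrier : ∀ m, Set (X.obj m)
  map_mem : ∀ ⦃m m' : SimplexCategoryᵒᵖ⦄ (f : m ⟶ m') ⦃σ : X.obj m⦄,
    σ ∈ carrier m → X.map f σ ∈ carrier m'

/-- The simplicial set underlying a subcomplex. -/
def Sub.toSSet {X : SSet.{0}} (S : Sub X) : SSet.{0} where
  obj m := S.carrier m
  map f := TypeCat.ofHom (fun σ => ⟨X.map f σ.1, S.map_mem f σ.2⟩)
  map_id m := by
    ext σ
    exact FunctorToTypes.map_id_apply X σ.1
  map_comp f g := by
    ext σ
    exact FunctorToTypes.map_comp_apply X f g σ.1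

/-- The inclusion of a subcomplex. -/
def Sub.ι {X : SSet.{0}} (S : Sub X) : S.toSSet ⟶ X where
  app _ := TypeCat.ofHom (fun σ => σ.1)
  naturality _ _ _ := rfl

/-- Containment of subcomplexes. -/
def Sub.Le {X : SSet.{0}} (S T : Sub X) : Prop := ∀ m, S.carrier m ⊆ T.carrier m

/-- The inclusion map associated to a containment of subcomplexes. -/
def Sub.homOfLe {X : SSet.{0}} {S T : Sub X} (h : S.Le T) : S.toSSet ⟶ T.toSSet where
  app m := TypeCat.ofHom (fun σ => ⟨σ.1, h m σ.2⟩)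
  naturality _ _ _ := rfl

/-- The union of two subcomplexes. -/
def Sub.union {X : SSet.{0}} (S T : Sub X) : Sub X where
  carrier m := S.carrier m ∪ T.carrier m
  map_mem _ _ f _ h := h.imp (fun hs => S.map_mem f hs) (fun ht => T.map_mem f ht)

/-- The intersection of two subcomplexes. -/
def Sub.inter {X : SSet.{0}} (S T : Sub X) : Sub X where
  carrier m := S.carrier m ∩ T.carrier m
  map_mem _ _ f _ h := ⟨S.map_mem f h.1, T.map_mem f h.2⟩

/-- A subcomplex `S` of `X`, viewed as a subcomplex of (the simplicial set underlying)
another subcomplex `T` of `X`. -/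
def Sub.restrict {X : SSet.{0}} (T S : Sub X) : Sub T.toSSet where
  carrier m := {σ | σ.1 ∈ S.carrier m}
  map_mem _ _ f _ h := S.map_mem f h

/-- The (dimension zero) object of `SimplexCategoryᵒᵖ` indexing vertices. -/
abbrev V0 : SimplexCategoryᵒᵖ := Opposite.op (SimplexCategory.mk 0)

/-- The full subcomplex of `X` on a set `ν` of vertices: the simplices all of whose
vertices lie in `ν`. -/
def fullSub (X : SSet.{0}) (ν : Set (X.obj V0)) : Sub X where
  carrier m := {σ | ∀ g : SimplexCategory.mk 0 ⟶ m.unop, X.map g.op σ ∈ ν}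
  map_mem := by
    intro m m' f σ hσ g
    rw [← FunctorToTypes.map_comp_apply]
    exact hσ (g ≫ f.unop)

/-! ## Widenings and widened inclusions -/

/-- The widening `W_ν(X)` of `X` at a set `ν` of vertices: the full subcomplex of
`J × X` on the vertex set `({0} × X₀) ∪ ({1} × ν)`. -/
def wideSub (X : SSet.{0}) (ν : Set (X.obj V0)) : Sub (sprod J X) :=
  fullSub (sprod J X) {p | p.1 0 = true → p.2 ∈ ν}

/-- The subcomplex `{0} × X` of `J × X` (the full subcomplex on the vertices
`{0} × X₀`). -/
def zeroSlice (X : SSet.{0}) : Sub (sprod J X) :=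
  fullSub (sprod J X) {p | p.1 0 = false}

/-- For `A` a subcomplex of `Y`, the subcomplex `J × A` of `J × Y`. -/
def Sub.prodJ {Y : SSet.{0}} (A : Sub Y) : Sub (sprod J Y) where
  carrier m := {p | p.2 ∈ A.carrier m}
  map_mem _ _ f _ h := A.map_mem f h

/-- Given a subcomplex (inclusion) `A = X ⊆ Y` and a set `ν` of vertices of `Y`, the
subcomplex `({0} × Y) ∪ W_{ν ∩ X₀}(X)` of `J × Y`: the domain of the inclusion
`X ↪ Y` widened at `ν`. -/
def widenedSub (Y : SSet.{0}) (A : Sub Y) (ν : Set (Y.obj V0)) : Sub (sprod J Y) :=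
  (zeroSlice Y).union ((wideSub Y (ν ∩ A.carrier V0)).inter A.prodJ)

lemma zeroSlice_le_wideSub (Y : SSet.{0}) (ν : Set (Y.obj V0)) :
    (zeroSlice Y).Le (wideSub Y ν) := by
  intro m σ hσ g h
  exact absurd (hσ g) (by simp [h])

lemma wideSub_mono (Y : SSet.{0}) {ν ν' : Set (Y.obj V0)} (h : ν ⊆ ν') :
    (wideSub Y ν).Le (wideSub Y ν') :=
  fun _ σ hσ g ht => h (hσ g ht)

lemma widenedSub_le (Y : SSet.{0}) (A : Sub Y) (ν : Set (Y.obj V0)) :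
    (widenedSub Y A ν).Le (wideSub Y ν) := by
  refine fun m σ hσ => Or.elim hσ (fun h => ?_) (fun h => ?_)
  · exact zeroSlice_le_wideSub Y ν m h
  · exact wideSub_mono Y Set.inter_subset_left m h.1

/-- The inclusion `X ↪ Y` widened at `ν`: the inclusion
`({0} × Y) ∪ W_{ν ∩ X₀}(X) ↪ W_ν(Y)`. -/
def widenedIncl (Y : SSet.{0}) (A : Sub Y) (ν : Set (Y.obj V0)) :
    (widenedSub Y A ν).toSSet ⟶ (wideSub Y ν).toSSet :=
  Sub.homOfLe (widenedSub_le Y A ν)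

/-- `Wide`: the class of all widened inclusions. -/
def Wide : MorphismProperty SSet.{0} := fun _ _ h =>
  ∃ (Y : SSet.{0}) (A : Sub Y) (ν : Set (Y.obj V0)),
    Arrow.mk h = Arrow.mk (widenedIncl Y A ν)

/-- `Wide^(1)`: the class of inclusions widened at a single vertex. -/
def Wide1 : MorphismProperty SSet.{0} := fun _ _ h =>
  ∃ (Y : SSet.{0}) (A : Sub Y) (v : Y.obj V0),
    Arrow.mk h = Arrow.mk (widenedIncl Y A {v})

/-! ## Narrow vertices -/

/-- A vertex `v` of `Y` is narrow if every simplex of `Y` has at most one vertex equal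
to `v`. -/
def Narrow (Y : SSet.{0}) (v : Y.obj V0) : Prop :=
  ∀ ⦃m : SimplexCategoryᵒᵖ⦄ (σ : Y.obj m) (g g' : SimplexCategory.mk 0 ⟶ m.unop),
    Y.map g.op σ = v → Y.map g'.op σ = v → g = g'

/-- `Wide_nar`: the class of inclusions widened at a narrow set of vertices. -/
def WideNar : MorphismProperty SSet.{0} := fun _ _ h =>
  ∃ (Y : SSet.{0}) (A : Sub Y) (ν : Set (Y.obj V0)),
    (∀ v ∈ ν, Narrow Y v) ∧ Arrow.mk h = Arrow.mk (widenedIncl Y A ν)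

/-- `Wide_nar^(1)`: the class of inclusions widened at a single narrow vertex. -/
def WideNar1 : MorphismProperty SSet.{0} := fun _ _ h =>
  ∃ (Y : SSet.{0}) (A : Sub Y) (v : Y.obj V0),
    Narrow Y v ∧ Arrow.mk h = Arrow.mk (widenedIncl Y A {v})

/-! ## Standard simplices, boundaries, skeleta, iso-horns -/

/-- The unique map to the terminal simplicial set `Δ[0]`. -/
def toPt (X : SSet.{0}) : X ⟶ Δ[0] where
  app m := TypeCat.ofHom (fun _ => SSet.stdSimplex.const 0 0 m)
  naturality m m' f := by
    ext x
    apply SSet.stdSimplex.objEquiv.injective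
    apply SimplexCategory.Hom.ext
    apply OrderHom.ext
    funext j
    exact Subsingleton.elim (α := Fin 1) _ _

/-- The `i`-th vertex of the standard simplex `Δ[n]`. -/
def vrt (n : ℕ) (i : Fin (n + 1)) : Δ[n].obj V0 :=
  SSet.stdSimplex.const n i V0

/-- The boundary `∂Δ[n]`, as a subcomplex of `Δ[n]`: the simplices which are not
surjective as monotone maps. -/
def bSub (n : ℕ) : Sub Δ[n] where
  carrier m := {σ | ¬Function.Surjective (SSet.stdSimplex.asOrderHom σ)}
  map_mem _ _ f σ hσ h := hσ (Function.Surjective.of_comp h)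

/-- The `k`-skeleton of `Y`, as a subcomplex: the simplices which factor through some
simplex of dimension at most `k`. -/
def skSub (Y : SSet.{0}) (k : ℕ) : Sub Y where
  carrier m := {σ | ∃ (j : ℕ) (_ : j ≤ k) (f : m.unop ⟶ SimplexCategory.mk j)
    (τ : Y.obj (Opposite.op (SimplexCategory.mk j))), Y.map f.op τ = σ}
  map_mem := by
    rintro m m' φ σ ⟨j, hj, f, τ, rfl⟩
    exact ⟨j, hj, φ.unop ≫ f, τ, by rw [← FunctorToTypes.map_comp_apply]; rfl⟩

/-- A `k`-simplex is nondegenerate if it admits no factorization through a simplex of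
strictly smaller dimension. -/
def Nondegenerate (Y : SSet.{0}) {k : ℕ} (σ : Y.obj (Opposite.op (SimplexCategory.mk k))) :
    Prop :=
  ∀ (j : ℕ) (f : SimplexCategory.mk k ⟶ SimplexCategory.mk j)
    (τ : Y.obj (Opposite.op (SimplexCategory.mk j))), Y.map f.op τ = σ → k ≤ j

/-- The iso-horn inclusion `𝕍_i[m+1] ↪ ∇̄_i[m+1]`: the boundary inclusion
`∂Δ[m] ↪ Δ[m]` widened at the single vertex `i`, i.e. the inclusion
`({0} × Δ[m]) ∪ W_i(∂Δ[m]) ↪ W_i(Δ[m])` of the iso-horn into the isoplex. -/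
def isoHornIncl (m : ℕ) (i : Fin (m + 1)) :
    (widenedSub Δ[m] (bSub m) {vrt m i}).toSSet ⟶ (wideSub Δ[m] {vrt m i}).toSSet :=
  widenedIncl Δ[m] (bSub m) {vrt m i}

/-- `IsoHorn`: the class of all iso-horn inclusions. -/
def IsoHorn : MorphismProperty SSet.{0} := fun _ _ h =>
  ∃ (m : ℕ) (i : Fin (m + 1)), Arrow.mk h = Arrow.mk (isoHornIncl m i)

/-! ## The classes `({0} ↪ J) □ Bdry` and `({0} ↪ J) □ Mono` -/

/-- The class `({0} ↪ J) □ Bdry` of pushout-products of the vertex `0 : Δ[0] ⟶ J`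
with the boundary inclusions `∂Δ[n] ↪ Δ[n]`. -/
def ppJ0Bdry : MorphismProperty SSet.{0} := fun _ _ h =>
  ∃ n : ℕ, Arrow.mk h = Arrow.mk (pp (ptJ false) (∂Δ[n].ι))

/-- The class `({0} ↪ J) □ Mono` of pushout-products of the vertex `0 : Δ[0] ⟶ J`
with all monomorphisms of simplicial sets. -/
def ppJ0Mono : MorphismProperty SSet.{0} := fun _ _ h =>
  ∃ (W Z : SSet.{0}) (g : W ⟶ Z), Mono g ∧ Arrow.mk h = Arrow.mk (pp (ptJ false) g)

/-! Keeping the `J`-coordinate of a simplex `(a, σ)` of `J × Y` only at the vertices of `σ`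
lying in `ν`, and setting it to `0` elsewhere, is a simplicial retraction of `J × Y` onto
`W_ν(Y)`: since `J` is the nerve of a chaotic groupoid, any vertexwise change of a
`J`-coordinate is simplicial. It fixes `{0} × Y` and sends `J × X` into `W_{ν ∩ X₀}(X)`, so it
also retracts the domain `({0} × Y) ∪ (J × X)` of the pushout-product onto
`({0} × Y) ∪ W_{ν ∩ X₀}(X)`, which sits inside it. -/

section Vertices

variable {Y : SSet.{0}} {m m' : SimplexCategoryᵒᵖ}

def vertex (σ : Y.obj m) (i : Fin (m.unop.len + 1)) : Y.obj V0 :=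
  Y.map (SimplexCategory.const (SimplexCategory.mk 0) m.unop i).op σ

lemma map_op_eq_vertex (σ : Y.obj m) (g : SimplexCategory.mk 0 ⟶ m.unop) :
    Y.map g.op σ = vertex σ (g.toOrderHom 0) := by
  rw [vertex, ← SimplexCategory.eq_const_of_zero]

lemma vertex_map (f : m ⟶ m') (σ : Y.obj m) (i : Fin (m'.unop.len + 1)) :
    vertex (Y.map f σ) i = vertex σ (f.unop.toOrderHom i) := by
  rw [vertex, ← Functor.map_comp_apply]
  rfl

lemma Sub.vertex_mem {S : Sub Y} {σ : Y.obj m} (hσ : σ ∈ S.carrier m)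
    (i : Fin (m.unop.len + 1)) : vertex σ i ∈ S.carrier V0 :=
  S.map_mem _ hσ

lemma mem_wideSub_iff {ν : Set (Y.obj V0)} {a : J.obj m} {σ : Y.obj m} :
    (a, σ) ∈ (wideSub Y ν).carrier m ↔ ∀ i, a i = true → vertex σ i ∈ ν := by
  refine ⟨fun h i => h (SimplexCategory.const _ _ i), fun h g => ?_⟩
  change a (g.toOrderHom 0) = true → Y.map g.op σ ∈ ν
  rw [map_op_eq_vertex]
  exact h _

lemma eq_false_of_mem_zeroSlice {a : J.obj m} {σ : Y.obj m}
    (h : (a, σ) ∈ (zeroSlice Y).carrier m) : a = fun _ => false :=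
  funext fun i => h (SimplexCategory.const _ _ i)

end Vertices

section WideRetraction

variable {Y : SSet.{0}} (ν : Set (Y.obj V0)) {m : SimplexCategoryᵒᵖ}

open Classical in
noncomputable def zeroOff (σ : Y.obj m) (a : J.obj m) : J.obj m :=
  fun i => a i && decide (vertex σ i ∈ ν)

open Classical in
lemma zeroOff_map {m' : SimplexCategoryᵒᵖ} (f : m ⟶ m') (σ : Y.obj m) (a : J.obj m) :
    zeroOff ν (Y.map f σ) (J.map f a) = J.map f (zeroOff ν σ a) := by
  funext i
  change (a _ && decide (vertex (Y.map f σ) i ∈ ν)) = (a _ && decide (vertex σ _ ∈ ν))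
  rw [vertex_map]

lemma zeroOff_mem_wideSub (σ : Y.obj m) (a : J.obj m) :
    (zeroOff ν σ a, σ) ∈ (wideSub Y ν).carrier m :=
  mem_wideSub_iff.2 fun i h => by
    simp only [zeroOff, Bool.and_eq_true, decide_eq_true_eq] at h
    exact h.2

lemma zeroOff_of_mem_wideSub {σ : Y.obj m} {a : J.obj m}
    (h : (a, σ) ∈ (wideSub Y ν).carrier m) : zeroOff ν σ a = a := by
  funext i
  cases ha : a i
  · simp [zeroOff, ha]
  · simpa [zeroOff, ha] using mem_wideSub_iff.1 h i ha

variable (Y)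

noncomputable def wideRetraction : sprod J Y ⟶ (wideSub Y ν).toSSet where
  app m := TypeCat.ofHom fun p => ⟨(zeroOff ν p.2 p.1, p.2), zeroOff_mem_wideSub ν p.2 p.1⟩
  naturality m m' f := by
    ext p
    exact Subtype.ext (Prod.ext (zeroOff_map ν f p.2 p.1) rfl)

lemma ι_comp_wideRetraction : (wideSub Y ν).ι ≫ wideRetraction Y ν = 𝟙 _ := by
  ext m x
  exact Subtype.ext (Prod.ext (zeroOff_of_mem_wideSub ν x.2) rfl)

end WideRetraction

section PushoutProduct

variable (Y : SSet.{0}) (A : Sub Y) (ν : Set (Y.obj V0))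

noncomputable abbrev ppDomain : SSet.{0} :=
  pushout (sprodMap (𝟙 Δ[0]) A.ι) (sprodMap (ptJ false) (𝟙 A.toSSet))

noncomputable abbrev ppInl : sprod Δ[0] Y ⟶ ppDomain Y A := pushout.inl _ _

noncomputable abbrev ppInr : sprod J A.toSSet ⟶ ppDomain Y A := pushout.inr _ _

variable {Y A} {m : SimplexCategoryᵒᵖ}

lemma ppInl_comp_pp : ppInl Y A ≫ pp (ptJ false) A.ι = sprodMap (ptJ false) (𝟙 Y) :=
  pushout.inl_desc _ _ _

lemma ppInr_comp_pp : ppInr Y A ≫ pp (ptJ false) A.ι = sprodMap (𝟙 J) A.ι :=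
  pushout.inr_desc _ _ _

lemma pp_ppInl_apply (p : (sprod Δ[0] Y).obj m) :
    (pp (ptJ false) A.ι).app m ((ppInl Y A).app m p) = ((fun _ => false), p.2) :=
  ConcreteCategory.congr_hom (NatTrans.congr_app ppInl_comp_pp m) p

lemma pp_ppInr_apply (p : (sprod J A.toSSet).obj m) :
    (pp (ptJ false) A.ι).app m ((ppInr Y A).app m p) = (p.1, p.2.1) :=
  ConcreteCategory.congr_hom (NatTrans.congr_app ppInr_comp_pp m) p

lemma ppInl_apply_eq_ppInr_apply (u : (Δ[0] : SSet.{0}).obj m) {σ : Y.obj m}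
    (hσ : σ ∈ A.carrier m) :
    (ppInl Y A).app m (u, σ) = (ppInr Y A).app m ((fun _ => false), ⟨σ, hσ⟩) :=
  ConcreteCategory.congr_hom (NatTrans.congr_app
    (pushout.condition (f := sprodMap (𝟙 Δ[0]) A.ι) (g := sprodMap (ptJ false) (𝟙 A.toSSet))) m)
    ((u, ⟨σ, hσ⟩) : (sprod Δ[0] A.toSSet).obj m)

instance : Mono (widenedIncl Y A ν) := by
  have (m : SimplexCategoryᵒᵖ) : Mono ((widenedIncl Y A ν).app m) :=
    (mono_iff_injective _).2 fun x y hxy => Subtype.ext (congrArg Subtype.val hxy :)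
  exact NatTrans.mono_of_mono_app _

variable {ν} in
lemma eq_false_of_mem_widenedSub {a : J.obj m} {σ : Y.obj m}
    (hx : (a, σ) ∈ (widenedSub Y A ν).carrier m) (hσ : σ ∉ A.carrier m) :
    a = fun _ => false :=
  hx.elim eq_false_of_mem_zeroSlice fun h => absurd h.2 hσ

variable (Y A)

def zeroSliceToWidenedSub : sprod Δ[0] Y ⟶ (widenedSub Y A ν).toSSet where
  app _ := TypeCat.ofHom fun p => ⟨((fun _ => false), p.2), Or.inl fun _ => rfl⟩
  naturality _ _ _ := rfl

noncomputable def prodJToWidenedSub : sprod J A.toSSet ⟶ (widenedSub Y A ν).toSSet where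
  app m := TypeCat.ofHom fun p => ⟨(zeroOff ν p.2.1 p.1, p.2.1),
    Or.inr ⟨mem_wideSub_iff.2 fun i h =>
      ⟨mem_wideSub_iff.1 (zeroOff_mem_wideSub ν p.2.1 p.1) i h, Sub.vertex_mem p.2.2 i⟩, p.2.2⟩⟩
  naturality m m' f := by
    ext p
    exact Subtype.ext (Prod.ext (zeroOff_map ν f p.2.1 p.1) rfl)

-- `false && b` reduces to `false`, so `zeroOff` fixes the constant tuple `0` by `rfl`.
noncomputable def widenedRetraction : ppDomain Y A ⟶ (widenedSub Y A ν).toSSet :=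
  pushout.desc (zeroSliceToWidenedSub Y A ν) (prodJToWidenedSub Y A ν) rfl

lemma ppInl_comp_widenedRetraction :
    ppInl Y A ≫ widenedRetraction Y A ν = zeroSliceToWidenedSub Y A ν :=
  pushout.inl_desc _ _ _

lemma ppInr_comp_widenedRetraction :
    ppInr Y A ≫ widenedRetraction Y A ν = prodJToWidenedSub Y A ν :=
  pushout.inr_desc _ _ _

lemma widenedRetraction_comp_widenedIncl :
    widenedRetraction Y A ν ≫ widenedIncl Y A ν = pp (ptJ false) A.ι ≫ wideRetraction Y ν := by
  apply pushout.hom_ext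
  · rw [← Category.assoc, ← Category.assoc, ppInl_comp_widenedRetraction, ppInl_comp_pp]
    rfl
  · rw [← Category.assoc, ← Category.assoc, ppInr_comp_widenedRetraction, ppInr_comp_pp]
    rfl

open Classical in
noncomputable def widenedSectionApp (m : SimplexCategoryᵒᵖ)
    (x : (widenedSub Y A ν).toSSet.obj m) : (ppDomain Y A).obj m :=
  if h : x.1.2 ∈ A.carrier m then (ppInr Y A).app m (x.1.1, ⟨x.1.2, h⟩)
  else (ppInl Y A).app m (SSet.stdSimplex.const 0 0 m, x.1.2)

variable {Y A ν}

lemma widenedSectionApp_of_mem {a : J.obj m} {σ : Y.obj m}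
    (hx : (a, σ) ∈ (widenedSub Y A ν).carrier m) (hσ : σ ∈ A.carrier m) :
    widenedSectionApp Y A ν m ⟨(a, σ), hx⟩ = (ppInr Y A).app m (a, ⟨σ, hσ⟩) :=
  dif_pos hσ

lemma widenedSectionApp_of_eq_false {a : J.obj m} {σ : Y.obj m}
    (hx : (a, σ) ∈ (widenedSub Y A ν).carrier m) (ha : a = fun _ => false) :
    widenedSectionApp Y A ν m ⟨(a, σ), hx⟩
      = (ppInl Y A).app m (SSet.stdSimplex.const 0 0 m, σ) := by
  by_cases hσ : σ ∈ A.carrier m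
  · rw [widenedSectionApp_of_mem hx hσ, ppInl_apply_eq_ppInr_apply _ hσ, ha]
  · exact dif_neg hσ

variable (Y A ν)

noncomputable def widenedSection : (widenedSub Y A ν).toSSet ⟶ ppDomain Y A where
  app m := TypeCat.ofHom (widenedSectionApp Y A ν m)
  naturality m m' f := by
    ext ⟨⟨a, σ⟩, hx⟩
    have hx' := (widenedSub Y A ν).map_mem f hx
    change widenedSectionApp Y A ν m' ⟨((J.map f a, Y.map f σ) : (sprod J Y).obj m'), hx'⟩
      = (ppDomain Y A).map f (widenedSectionApp Y A ν m ⟨(a, σ), hx⟩)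
    by_cases hσ : σ ∈ A.carrier m
    · rw [widenedSectionApp_of_mem hx' (A.map_mem f hσ), widenedSectionApp_of_mem hx hσ]
      exact NatTrans.naturality_apply (ppInr Y A) f ((a, ⟨σ, hσ⟩) : (sprod J A.toSSet).obj m)
    · have ha := eq_false_of_mem_widenedSub hx hσ
      rw [widenedSectionApp_of_eq_false hx' (by rw [ha]; rfl), widenedSectionApp_of_eq_false hx ha]
      exact NatTrans.naturality_apply (ppInl Y A) f
        ((SSet.stdSimplex.const 0 0 m, σ) : (sprod Δ[0] Y).obj m)

lemma widenedSection_comp_pp :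
    widenedSection Y A ν ≫ pp (ptJ false) A.ι = widenedIncl Y A ν ≫ (wideSub Y ν).ι := by
  ext m ⟨⟨a, σ⟩, hx⟩
  change (pp (ptJ false) A.ι).app m (widenedSectionApp Y A ν m ⟨(a, σ), hx⟩) = (a, σ)
  by_cases hσ : σ ∈ A.carrier m
  · rw [widenedSectionApp_of_mem hx hσ]
    exact pp_ppInr_apply _
  · have ha := eq_false_of_mem_widenedSub hx hσ
    rw [widenedSectionApp_of_eq_false hx ha, ha]
    exact pp_ppInl_apply _

lemma widenedSection_comp_widenedRetraction :
    widenedSection Y A ν ≫ widenedRetraction Y A ν = 𝟙 _ := by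
  rw [← cancel_mono (widenedIncl Y A ν), Category.assoc, widenedRetraction_comp_widenedIncl,
    ← Category.assoc, widenedSection_comp_pp, Category.assoc, ι_comp_wideRetraction]
  rfl

end PushoutProduct

/-- For every inclusion of simplicial sets `X ↪ Y` (given by a
subcomplex `A` of `Y`) and every set `ν` of vertices of `Y`, the inclusion `X ↪ Y`
widened at `ν` is a retract, in the arrow category, of the pushout-product
`({0} ↪ J) □ (X ↪ Y) : ({0} × Y) ∪ (J × X) ↪ J × Y`. -/
theorem widenedIncl_retract_of_pp (Y : SSet.{0}) (A : Sub Y) (ν : Set (Y.obj V0)) :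
    ∃ (i : Arrow.mk (widenedIncl Y A ν) ⟶ Arrow.mk (pp (ptJ false) A.ι))
      (r : Arrow.mk (pp (ptJ false) A.ι) ⟶ Arrow.mk (widenedIncl Y A ν)),
      i ≫ r = 𝟙 _ :=
  ⟨Arrow.homMk _ _ (widenedSection_comp_pp Y A ν),
    Arrow.homMk _ _ (widenedRetraction_comp_widenedIncl Y A ν),
    Arrow.hom_ext _ _ (widenedSection_comp_widenedRetraction Y A ν)
      (ι_comp_wideRetraction Y ν)⟩

end Paper
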